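/- Let F be a field, a ∈ F an element of multiplicative order ℓ (a^ℓ = 1 and a^j ≠ 1 for all 0 < j < ℓ), K a subfield of F, s, t natural numbers, x : Fin s → F, and w : Fin s → F (a multiplier constant on each orbit). Then the following two subsets of (Fin s → F) are equal: { v | (∀ i, v i ∈ K) and ∀ f ∈ F[X], natDegree(f) ≤ t·ℓ → ∑_{i ∈ Fin s} ∑_{j ∈ Fin ℓ} (v i) · (w i) · f(a^j · x i) = 0 } = { v | (∀ i, v i ∈ K) and ∀ g ∈ F[X], natDegree(g) ≤ t → ∑_{i ∈ Fin s} (v i) · (w i) · g((x i)^ℓ) = 0 }. In other words, the punctured invariant subcode of the quasi-cyclic alternant code of order t·ℓ + 1 with support (i,j) ↦ a^j · x i and multiplier (i,j) ↦ w i is the alternant code of order t + 1 over K with support i ↦ (x i)^ℓ and multiplier i ↦ w i. -/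

import Mathlib

/-!
Averaging `f` over the orbit `{a ^ j * c}` is a character sum: a monomial of degree `n` is
multiplied by `∑ j, (a ^ n) ^ j`, which is `ℓ` if `ℓ ∣ n` and `0` otherwise. Hence the orbit sum
of `f` is `ℓ • (contract ℓ f)(c ^ ℓ)`, and `ℓ ≠ 0` in `F` because `F` contains a primitive `ℓ`-th
root of unity. Finally `contract ℓ` and `expand ℓ` carry the polynomials of degree `≤ t * ℓ`
onto those of degree `≤ t`.
-/

open Polynomial Finset

namespace Polynomial

variable {R : Type*} [CommSemiring R] {p : ℕ}

theorem contract_monomial (hp : p ≠ 0) (n : ℕ) (b : R) :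
    contract p (monomial n b) = if p ∣ n then monomial (n / p) b else 0 := by
  ext m
  rw [coeff_contract hp]
  by_cases hdvd : p ∣ n
  · obtain ⟨k, rfl⟩ := hdvd
    simp [coeff_monomial, mul_comm p, Nat.mul_left_inj hp,
      Nat.mul_div_cancel _ (Nat.pos_of_ne_zero hp)]
  · rw [if_neg hdvd, coeff_monomial, if_neg fun h ↦ hdvd ⟨m, h.trans (mul_comm m p)⟩,
      coeff_zero]

theorem natDegree_contract_le (hp : p ≠ 0) (f : R[X]) :
    (contract p f).natDegree ≤ f.natDegree / p := by
  refine natDegree_le_iff_coeff_eq_zero.mpr fun n hn ↦ ?_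
  rw [coeff_contract hp]
  exact coeff_eq_zero_of_natDegree_lt ((Nat.div_lt_iff_lt_mul (Nat.pos_of_ne_zero hp)).mp hn)

end Polynomial

namespace IsPrimitiveRoot

variable {R : Type*} [CommRing R] [IsDomain R] {ζ : R} {ℓ : ℕ}

theorem geom_sum_pow_eq_ite (hζ : IsPrimitiveRoot ζ ℓ) (n : ℕ) :
    ∑ j ∈ range ℓ, (ζ ^ n) ^ j = if ℓ ∣ n then (ℓ : R) else 0 := by
  split_ifs with hn
  · simp [(hζ.pow_eq_one_iff_dvd n).mpr hn]
  · have hne : ζ ^ n - 1 ≠ 0 := sub_ne_zero.mpr fun h ↦ hn ((hζ.pow_eq_one_iff_dvd n).mp h)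
    refine (mul_eq_zero.mp ?_).resolve_left hne
    rw [mul_geom_sum, ← pow_mul, mul_comm, pow_mul, hζ.pow_eq_one, one_pow, sub_self]

theorem sum_eval_pow_mul (hζ : IsPrimitiveRoot ζ ℓ) (f : R[X]) (c : R) :
    ∑ j ∈ range ℓ, f.eval (ζ ^ j * c) = ℓ * (contract ℓ f).eval (c ^ ℓ) := by
  obtain rfl | hℓ := eq_or_ne ℓ 0
  · simp
  induction f using Polynomial.induction_on' with
  | add f g hf hg => simp only [eval_add, sum_add_distrib, hf, hg, contract_add hℓ, mul_add]
  | monomial n b =>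
    have hpow : ∀ j, (ζ ^ j * c) ^ n = c ^ n * (ζ ^ n) ^ j := fun j ↦ by ring
    simp only [eval_monomial, hpow, ← mul_assoc, ← mul_sum, hζ.geom_sum_pow_eq_ite,
      contract_monomial hℓ]
    split_ifs with hdvd
    · rw [eval_monomial, ← pow_mul, Nat.mul_div_cancel' hdvd]
      ring
    · simp

end IsPrimitiveRoot

/-- The punctured invariant subcode of the quasi-cyclic alternant code of order
`t·ℓ + 1` with support `(i,j) ↦ a^j · x i` and multiplier `(i,j) ↦ w i` is the
alternant code of order `t + 1` over the subfield `K` with support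
`i ↦ (x i)^ℓ` and multiplier `i ↦ w i`. -/
theorem invariant_alternant_code_homothety {F : Type*} [Field F] (a : F)
    (ℓ : ℕ) (hℓ : 0 < ℓ) (ha1 : a ^ ℓ = 1)
    (ha2 : ∀ j : ℕ, 0 < j → j < ℓ → a ^ j ≠ 1) (K : Subfield F) (s t : ℕ)
    (x w : Fin s → F) :
    {v : Fin s → F | (∀ i, v i ∈ K) ∧ ∀ f : F[X], f.natDegree ≤ t * ℓ →
        ∑ i : Fin s, ∑ j : Fin ℓ, v i * w i * f.eval (a ^ (j : ℕ) * x i) = 0} =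
      {v : Fin s → F | (∀ i, v i ∈ K) ∧ ∀ g : F[X], g.natDegree ≤ t →
        ∑ i : Fin s, v i * w i * g.eval (x i ^ ℓ) = 0} := by
  have ha : IsPrimitiveRoot a ℓ := .mk_of_lt a hℓ ha1 ha2
  have : NeZero ℓ := .of_pos hℓ
  have hℓF : (ℓ : F) ≠ 0 := ha.neZero'.out
  have horbit : ∀ (v : Fin s → F) (f : F[X]),
      ∑ i, ∑ j : Fin ℓ, v i * w i * f.eval (a ^ (j : ℕ) * x i) =
        ℓ * ∑ i, v i * w i * (contract ℓ f).eval (x i ^ ℓ) := fun v f ↦ by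
    rw [mul_sum]
    refine sum_congr rfl fun i _ ↦ ?_
    rw [← mul_sum, Fin.sum_univ_eq_sum_range (fun j ↦ f.eval (a ^ j * x i)),
      ha.sum_eval_pow_mul]
    ring
  ext v
  simp only [Set.mem_ofPred_eq, horbit, mul_eq_zero, hℓF, false_or]
  refine and_congr_right fun _ ↦ ⟨fun h g hg ↦ ?_, fun h f hf ↦ ?_⟩
  · simpa only [contract_expand ℓ hℓ.ne'] using
      h (expand F ℓ g) ((natDegree_expand ℓ g).trans_le (Nat.mul_le_mul_right ℓ hg))
  · exact h _ ((natDegree_contract_le hℓ.ne' f).trans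
      (Nat.div_le_of_le_mul (mul_comm t ℓ ▸ hf)))
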